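/- Let X ⊆ ℝ^d be a nonempty compact convex set and Ω a set. Let K be a sectional transfer operator on sections Ω → M₁(X) (countable index set I, branches θ_i : Ω → Ω, weights p_i : Ω → [0,∞) with ∑_{i∈I} p_i(ω) = 1, and C³ fibre maps g_ω : ℝ^d → ℝ^d with g_ω(X) ⊆ X) whose derivative bounds L_k = sup_{ω∈Ω} sup_{x∈X} ‖D^k g_ω(x)‖ (k = 1,2,3) satisfy max{L₁ + L₂ + L₃, L₁² + 3·L₁·L₂, L₁³} ≤ λ for some 0 ≤ λ < 1. Let K′ be another sectional transfer operator of the same form on the same Ω and X, with its own countable branches, nonnegative weights summing to one, and Borel measurable fibre maps preserving X (no contraction assumed for K′). Suppose ν, ν′ : Ω → M₁(X) satisfy (Kν)_ω = ν_ω and (K′ν′)_ω = ν′_ω for all ω ∈ Ω, and let D ≥ 0 be such that N₃((Kν′)_ω, (K′ν′)_ω) ≤ D for every ω ∈ Ω. Then N₃(ν_ω, ν′_ω) ≤ D/(1−λ) for every ω ∈ Ω. -/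

import Mathlib

open MeasureTheory

/-- `⨆_{x ∈ X} ‖D^j φ(x)‖`, the supremum over `X` of the norm of the `j`-th iterated
Fréchet derivative of `φ`. -/
noncomputable def supDerivOn {E : Type*} [NormedAddCommGroup E] [NormedSpace ℝ E]
    (X : Set E) (j : ℕ) (φ : E → ℝ) : ℝ :=
  ⨆ x ∈ X, ‖iteratedFDeriv ℝ j φ x‖

/-- The `C³`-dual seminorm distance between two finite Borel measures:
`N₃(σ,σ′) = sup { ∫ φ dσ − ∫ φ dσ′ : φ C³, ∑_{j=1}^{3} sup_{x∈X} ‖D^j φ(x)‖ ≤ 1 }`. -/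
noncomputable def N3 {E : Type*} [NormedAddCommGroup E] [NormedSpace ℝ E]
    [MeasurableSpace E] (X : Set E) (σ σ' : Measure E) : ℝ :=
  ⨆ φ : {φ : E → ℝ // ContDiff ℝ 3 φ ∧
      supDerivOn X 1 φ + supDerivOn X 2 φ + supDerivOn X 3 φ ≤ 1},
    (∫ x, φ.1 x ∂σ) - ∫ x, φ.1 x ∂σ'

/-- The sectional transfer operator (full-branch form):
`(Kν)_ω = ∑_{i∈I} p_i(ω) · (g_{θ_i(ω)})_* ν_{θ_i(ω)}`. -/
noncomputable def sectionalTransfer {Ω X I : Type*} [MeasurableSpace X]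
    (θ : I → Ω → Ω) (p : I → Ω → ℝ) (g : Ω → X → X)
    (ν : Ω → Measure X) (ω : Ω) : Measure X :=
  Measure.sum fun i => ENNReal.ofReal (p i ω) • ((ν (θ i ω)).map (g (θ i ω)))

/-!
Let `M = sup_ω N₃(ν_ω, ν′_ω)`; it is finite because a test function with `‖Dφ‖ ≤ 1` on the
convex set `X` oscillates there by at most `diam X`. By the chain rule up to order three
(`D³(φ ∘ g)` is bounded by `‖D³φ‖ L₁³ + 3 ‖D²φ‖ L₁ L₂ + ‖Dφ‖ L₃`, and similarly in lower order),
composing with a fibre map `g_ω` multiplies the `C³` seminorm of a test function by at most `λ`.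
Hence `K` contracts `N₃` fibrewise, `N₃((Kν)_ω, (Kν′)_ω) ≤ λ M`, and the triangle inequality
through `(Kν′)_ω` together with the two fixed-point equations gives `M ≤ λ M + D`.
-/

open Set Filter Topology Finset ContinuousLinearMap

section Composition

variable {E F G : Type*} [NormedAddCommGroup E] [NormedSpace ℝ E]
  [NormedAddCommGroup F] [NormedSpace ℝ F] [NormedAddCommGroup G] [NormedSpace ℝ G]
  {φ : F → G} {g : E → F}

theorem norm_iteratedFDeriv_succ_comp_le {n : ℕ} (hφ : ContDiff ℝ (n + 1) φ)
    (hg : ContDiff ℝ (n + 1) g) (x : E) :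
    ‖iteratedFDeriv ℝ (n + 1) (φ ∘ g) x‖ ≤ ∑ i ∈ range (n + 1),
      (n.choose i : ℝ) * ‖iteratedFDeriv ℝ i (fderiv ℝ φ ∘ g) x‖ *
        ‖iteratedFDeriv ℝ (n - i + 1) g x‖ := by
  have hderiv : fderiv ℝ (φ ∘ g) = fun y => compL ℝ E F G (fderiv ℝ φ (g y)) (fderiv ℝ g y) :=
    funext fun y => fderiv_comp y (hφ.differentiable (by simp) _) (hg.differentiable (by simp) _)
  rw [← norm_iteratedFDeriv_fderiv, hderiv]
  refine ((compL ℝ E F G).norm_iteratedFDeriv_le_of_bilinear_of_le_one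
    ((hφ.fderiv_right le_rfl).comp (hg.of_le (by simp))) (hg.fderiv_right le_rfl) x le_rfl
    (norm_compL_le ℝ E F G)).trans_eq ?_
  simp only [Function.comp_def, norm_iteratedFDeriv_fderiv]

theorem norm_iteratedFDeriv_one_comp_le (hφ : ContDiff ℝ 1 φ) (hg : ContDiff ℝ 1 g) (x : E) :
    ‖iteratedFDeriv ℝ 1 (φ ∘ g) x‖ ≤
      ‖iteratedFDeriv ℝ 1 φ (g x)‖ * ‖iteratedFDeriv ℝ 1 g x‖ := by
  simpa using norm_iteratedFDeriv_succ_comp_le (n := 0) hφ hg x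

theorem norm_iteratedFDeriv_two_comp_le (hφ : ContDiff ℝ 2 φ) (hg : ContDiff ℝ 2 g) (x : E) :
    ‖iteratedFDeriv ℝ 2 (φ ∘ g) x‖ ≤
      ‖iteratedFDeriv ℝ 2 φ (g x)‖ * ‖iteratedFDeriv ℝ 1 g x‖ ^ 2 +
        ‖iteratedFDeriv ℝ 1 φ (g x)‖ * ‖iteratedFDeriv ℝ 2 g x‖ := by
  have hDφ₁ := norm_iteratedFDeriv_one_comp_le (hφ.fderiv_right le_rfl) (hg.of_le (by norm_num)) x
  have hleib := norm_iteratedFDeriv_succ_comp_le (n := 1) hφ hg x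
  simp only [norm_iteratedFDeriv_fderiv] at hDφ₁
  simp only [sum_range_succ, sum_range_zero] at hleib
  -- the orders `1 + 1`, `1 - 0 + 1`, ... sit in dependent types, which only `dsimp` may rewrite
  dsimp only [Nat.reduceAdd, Nat.reduceSub] at hleib hDφ₁
  norm_num [norm_iteratedFDeriv_zero] at hleib hDφ₁ ⊢
  linarith [mul_le_mul_of_nonneg_right hDφ₁ (norm_nonneg (fderiv ℝ g x))]

theorem norm_iteratedFDeriv_three_comp_le (hφ : ContDiff ℝ 3 φ) (hg : ContDiff ℝ 3 g) (x : E) :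
    ‖iteratedFDeriv ℝ 3 (φ ∘ g) x‖ ≤
      ‖iteratedFDeriv ℝ 3 φ (g x)‖ * ‖iteratedFDeriv ℝ 1 g x‖ ^ 3 +
        3 * ‖iteratedFDeriv ℝ 2 φ (g x)‖ * ‖iteratedFDeriv ℝ 1 g x‖ *
          ‖iteratedFDeriv ℝ 2 g x‖ +
        ‖iteratedFDeriv ℝ 1 φ (g x)‖ * ‖iteratedFDeriv ℝ 3 g x‖ := by
  have hDφ₁ := norm_iteratedFDeriv_one_comp_le (hφ.fderiv_right (by norm_num))
    (hg.of_le (by norm_num)) x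
  have hDφ₂ := norm_iteratedFDeriv_two_comp_le (hφ.fderiv_right le_rfl) (hg.of_le (by norm_num)) x
  have hleib := norm_iteratedFDeriv_succ_comp_le (n := 2) hφ hg x
  simp only [norm_iteratedFDeriv_fderiv] at hDφ₁ hDφ₂
  simp only [sum_range_succ, sum_range_zero] at hleib
  dsimp only [Nat.reduceAdd, Nat.reduceSub] at hleib hDφ₁ hDφ₂
  norm_num [norm_iteratedFDeriv_zero] at hleib hDφ₁ hDφ₂ ⊢
  linarith [mul_le_mul_of_nonneg_right hDφ₁ (norm_nonneg (iteratedFDeriv ℝ 2 g x)),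
    mul_le_mul_of_nonneg_right hDφ₂ (norm_nonneg (fderiv ℝ g x))]

end Composition

section C3Seminorm

variable {E : Type*} [NormedAddCommGroup E] [NormedSpace ℝ E]

noncomputable def c3Seminorm (X : Set E) (φ : E → ℝ) : ℝ :=
  supDerivOn X 1 φ + supDerivOn X 2 φ + supDerivOn X 3 φ

theorem supDerivOn_nonneg (X : Set E) (j : ℕ) (φ : E → ℝ) : 0 ≤ supDerivOn X j φ :=
  Real.iSup_nonneg fun _ => Real.iSup_nonneg fun _ => norm_nonneg _

theorem c3Seminorm_nonneg (X : Set E) (φ : E → ℝ) : 0 ≤ c3Seminorm X φ := by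
  unfold c3Seminorm
  linarith [supDerivOn_nonneg X 1 φ, supDerivOn_nonneg X 2 φ, supDerivOn_nonneg X 3 φ]

variable {X : Set E} {φ : E → ℝ}

theorem supDerivOn_le {j : ℕ} {C : ℝ} (hC : 0 ≤ C)
    (h : ∀ x ∈ X, ‖iteratedFDeriv ℝ j φ x‖ ≤ C) : supDerivOn X j φ ≤ C :=
  Real.iSup_le (fun x => Real.iSup_le (h x) hC) hC

theorem norm_iteratedFDeriv_le_supDerivOn (hX : IsCompact X) {j : ℕ}
    (hφ : Continuous (iteratedFDeriv ℝ j φ)) {x : E} (hx : x ∈ X) :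
    ‖iteratedFDeriv ℝ j φ x‖ ≤ supDerivOn X j φ := by
  refine le_ciSup₂ (f := fun y (_ : y ∈ X) => ‖iteratedFDeriv ℝ j φ y‖) ?_ x hx
  obtain ⟨C, hC⟩ := hX.bddAbove_image hφ.norm.continuousOn
  exact ⟨C, by rintro - ⟨-, ⟨y, rfl⟩, hy, rfl⟩; exact hC ⟨y, hy, rfl⟩⟩

theorem supDerivOn_const_smul {j : ℕ} (hφ : ContDiff ℝ j φ) (c : ℝ) :
    supDerivOn X j (c • φ) = |c| * supDerivOn X j φ := by
  simp only [supDerivOn, iteratedFDeriv_const_smul_apply hφ.contDiffAt, norm_smul,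
    Real.norm_eq_abs, Real.mul_iSup_of_nonneg (abs_nonneg c)]

theorem c3Seminorm_const_smul (hφ : ContDiff ℝ 3 φ) (c : ℝ) :
    c3Seminorm X (c • φ) = |c| * c3Seminorm X φ := by
  simp only [c3Seminorm, supDerivOn_const_smul (j := 1) (hφ.of_le (by norm_num)),
    supDerivOn_const_smul (j := 2) (hφ.of_le (by norm_num)), supDerivOn_const_smul (j := 3) hφ]
  ring

theorem c3Seminorm_zero : c3Seminorm X (0 : E → ℝ) = 0 := by
  simp [c3Seminorm, supDerivOn]

theorem abs_sub_le_diam_of_c3Seminorm_le_one (hX : IsCompact X) (hXc : Convex ℝ X)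
    (hφ : ContDiff ℝ 1 φ) (h1 : c3Seminorm X φ ≤ 1) {x y : E} (hx : x ∈ X) (hy : y ∈ X) :
    |φ x - φ y| ≤ Metric.diam X := by
  have hDφ : ∀ z ∈ X, ‖fderiv ℝ φ z‖ ≤ 1 := fun z hz => by
    have := norm_iteratedFDeriv_le_supDerivOn hX (hφ.continuous_iteratedFDeriv le_rfl) hz
    rw [norm_iteratedFDeriv_one] at this
    unfold c3Seminorm at h1
    linarith [supDerivOn_nonneg X 2 φ, supDerivOn_nonneg X 3 φ]
  calc |φ x - φ y| ≤ 1 * ‖x - y‖ :=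
        hXc.norm_image_sub_le_of_norm_fderiv_le (fun z _ => hφ.differentiable (by norm_num) z)
          hDφ hy hx
    _ ≤ Metric.diam X := by
        rw [one_mul, ← dist_eq_norm]; exact Metric.dist_le_diam_of_mem hX.isBounded hx hy

theorem c3Seminorm_comp_le (hX : IsCompact X) (hXne : X.Nonempty) (hφ : ContDiff ℝ 3 φ)
    {G : E → E} (hG : ContDiff ℝ 3 G) (hGX : MapsTo G X X) {L₁ L₂ L₃ : ℝ}
    (hL₁ : ∀ x ∈ X, ‖iteratedFDeriv ℝ 1 G x‖ ≤ L₁)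
    (hL₂ : ∀ x ∈ X, ‖iteratedFDeriv ℝ 2 G x‖ ≤ L₂)
    (hL₃ : ∀ x ∈ X, ‖iteratedFDeriv ℝ 3 G x‖ ≤ L₃) :
    c3Seminorm X (φ ∘ G) ≤
      max (L₁ + L₂ + L₃) (max (L₁ ^ 2 + 3 * L₁ * L₂) (L₁ ^ 3)) * c3Seminorm X φ := by
  obtain ⟨x₀, hx₀⟩ := hXne
  have hL₁0 : 0 ≤ L₁ := (norm_nonneg _).trans (hL₁ x₀ hx₀)
  have hL₂0 : 0 ≤ L₂ := (norm_nonneg _).trans (hL₂ x₀ hx₀)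
  have hL₃0 : 0 ≤ L₃ := (norm_nonneg _).trans (hL₃ x₀ hx₀)
  set N₁ := supDerivOn X 1 φ
  set N₂ := supDerivOn X 2 φ
  set N₃ := supDerivOn X 3 φ
  have hN₁0 : 0 ≤ N₁ := supDerivOn_nonneg X 1 φ
  have hN₂0 : 0 ≤ N₂ := supDerivOn_nonneg X 2 φ
  have hN₃0 : 0 ≤ N₃ := supDerivOn_nonneg X 3 φ
  have hN {j : ℕ} (hj : j ≤ 3) {x : E} (hx : x ∈ X) :
      ‖iteratedFDeriv ℝ j φ (G x)‖ ≤ supDerivOn X j φ :=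
    norm_iteratedFDeriv_le_supDerivOn hX (hφ.continuous_iteratedFDeriv (by exact_mod_cast hj))
      (hGX hx)
  have h₁ : supDerivOn X 1 (φ ∘ G) ≤ N₁ * L₁ := by
    refine supDerivOn_le (by positivity) fun x hx => ?_
    refine (norm_iteratedFDeriv_one_comp_le (hφ.of_le (by norm_num)) (hG.of_le (by norm_num))
      x).trans ?_
    gcongr
    exacts [hN (by norm_num) hx, hL₁ x hx]
  have h₂ : supDerivOn X 2 (φ ∘ G) ≤ N₂ * L₁ ^ 2 + N₁ * L₂ := by
    refine supDerivOn_le (by positivity) fun x hx => ?_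
    refine (norm_iteratedFDeriv_two_comp_le (hφ.of_le (by norm_num)) (hG.of_le (by norm_num))
      x).trans ?_
    gcongr
    exacts [hN (by norm_num) hx, hL₁ x hx, hN (by norm_num) hx, hL₂ x hx]
  have h₃ : supDerivOn X 3 (φ ∘ G) ≤ N₃ * L₁ ^ 3 + 3 * N₂ * L₁ * L₂ + N₁ * L₃ := by
    refine supDerivOn_le (by positivity) fun x hx => ?_
    refine (norm_iteratedFDeriv_three_comp_le hφ hG x).trans ?_
    gcongr
    exacts [hN (by norm_num) hx, hL₁ x hx, hN (by norm_num) hx, hL₁ x hx, hL₂ x hx,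
      hN (by norm_num) hx, hL₃ x hx]
  set m := max (L₁ + L₂ + L₃) (max (L₁ ^ 2 + 3 * L₁ * L₂) (L₁ ^ 3))
  have hm₁ : N₁ * (L₁ + L₂ + L₃) ≤ N₁ * m := by gcongr; exact le_max_left _ _
  have hm₂ : N₂ * (L₁ ^ 2 + 3 * L₁ * L₂) ≤ N₂ * m := by
    gcongr; exact (le_max_left _ _).trans (le_max_right _ _)
  have hm₃ : N₃ * L₁ ^ 3 ≤ N₃ * m := by
    gcongr; exact (le_max_right _ _).trans (le_max_right _ _)
  simp only [c3Seminorm]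
  linarith

end C3Seminorm

theorem MeasureTheory.nonempty_of_measure_compl_eq_zero {α : Type*} [MeasurableSpace α]
    {μ : Measure α} [IsProbabilityMeasure μ] {s : Set α} (hs : μ sᶜ = 0) : s.Nonempty := by
  by_contra h
  simp [not_nonempty_iff_eq_empty.mp h] at hs

theorem Continuous.integrable_of_measure_compl_eq_zero {α β : Type*} [TopologicalSpace α]
    [T2Space α] [MeasurableSpace α] [OpensMeasurableSpace α] [NormedAddCommGroup β]
    {f : α → β} {μ : Measure α} [IsFiniteMeasure μ] {s : Set α} (hf : Continuous f)
    (hs : IsCompact s) (hμ : μ sᶜ = 0) : Integrable f μ := by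
  rw [← Measure.restrict_eq_self_of_ae_mem (mem_ae_iff.mpr hμ)]
  exact hf.continuousOn.integrableOn_compact hs

section N3

variable {E : Type*} [NormedAddCommGroup E] [NormedSpace ℝ E] [MeasurableSpace E]
  {X : Set E} {φ : E → ℝ} {σ σ' σ'' : Measure E}

theorem N3_le {C : ℝ}
    (h : ∀ φ : E → ℝ, ContDiff ℝ 3 φ → c3Seminorm X φ ≤ 1 → (∫ x, φ x ∂σ) - ∫ x, φ x ∂σ' ≤ C) :
    N3 X σ σ' ≤ C :=
  have : Nonempty {ψ : E → ℝ // ContDiff ℝ 3 ψ ∧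
      supDerivOn X 1 ψ + supDerivOn X 2 ψ + supDerivOn X 3 ψ ≤ 1} :=
    ⟨0, contDiff_zero_fun, c3Seminorm_zero.le.trans zero_le_one⟩
  ciSup_le fun ψ => h ψ.1 ψ.2.1 ψ.2.2

variable [OpensMeasurableSpace E] [IsProbabilityMeasure σ] [IsProbabilityMeasure σ']
  [IsProbabilityMeasure σ'']

theorem integral_sub_integral_le_two_mul_diam (hX : IsCompact X) (hXc : Convex ℝ X)
    (hφ : ContDiff ℝ 1 φ) (h1 : c3Seminorm X φ ≤ 1) (hσ : σ Xᶜ = 0) (hσ' : σ' Xᶜ = 0) :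
    (∫ x, φ x ∂σ) - ∫ x, φ x ∂σ' ≤ 2 * Metric.diam X := by
  obtain ⟨x₀, hx₀⟩ := nonempty_of_measure_compl_eq_zero hσ
  have hdev (μ : Measure E) [IsProbabilityMeasure μ] (hμ : μ Xᶜ = 0) :
      |(∫ x, φ x ∂μ) - φ x₀| ≤ Metric.diam X := by
    have hint := hφ.continuous.integrable_of_measure_compl_eq_zero hX hμ
    have hae : ∀ᵐ x ∂μ, ‖φ x - φ x₀‖ ≤ Metric.diam X := by
      filter_upwards [mem_ae_iff.mpr hμ] with x hx
      exact abs_sub_le_diam_of_c3Seminorm_le_one hX hXc hφ h1 hx hx₀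
    simpa [integral_sub hint (integrable_const _)] using norm_integral_le_of_norm_le_const hae
  have h := hdev σ hσ
  have h' := hdev σ' hσ'
  rw [abs_le] at h h'
  linarith

theorem integral_sub_integral_le_N3 (hX : IsCompact X) (hXc : Convex ℝ X)
    (hφ : ContDiff ℝ 3 φ) (h1 : c3Seminorm X φ ≤ 1) (hσ : σ Xᶜ = 0) (hσ' : σ' Xᶜ = 0) :
    (∫ x, φ x ∂σ) - ∫ x, φ x ∂σ' ≤ N3 X σ σ' := by
  refine le_ciSup (f := fun ψ : {ψ : E → ℝ // ContDiff ℝ 3 ψ ∧ c3Seminorm X ψ ≤ 1} =>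
    (∫ x, ψ.1 x ∂σ) - ∫ x, ψ.1 x ∂σ') ⟨2 * Metric.diam X, ?_⟩ ⟨φ, hφ, h1⟩
  rintro - ⟨ψ, rfl⟩
  exact integral_sub_integral_le_two_mul_diam hX hXc (ψ.2.1.of_le (by norm_num)) ψ.2.2 hσ hσ'

theorem N3_le_two_mul_diam (hX : IsCompact X) (hXc : Convex ℝ X) (hσ : σ Xᶜ = 0)
    (hσ' : σ' Xᶜ = 0) : N3 X σ σ' ≤ 2 * Metric.diam X :=
  N3_le fun _ hφ h1 =>
    integral_sub_integral_le_two_mul_diam hX hXc (hφ.of_le (by norm_num)) h1 hσ hσ'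

theorem N3_triangle (hX : IsCompact X) (hXc : Convex ℝ X) (hσ : σ Xᶜ = 0) (hσ' : σ' Xᶜ = 0)
    (hσ'' : σ'' Xᶜ = 0) : N3 X σ σ'' ≤ N3 X σ σ' + N3 X σ' σ'' :=
  N3_le fun φ hφ h1 => by
    linarith [integral_sub_integral_le_N3 hX hXc hφ h1 hσ hσ',
      integral_sub_integral_le_N3 hX hXc hφ h1 hσ' hσ'']

theorem integral_sub_integral_le_mul_N3 (hX : IsCompact X) (hXc : Convex ℝ X)
    (hφ : ContDiff ℝ 3 φ) {s : ℝ} (hs : c3Seminorm X φ ≤ s) (hσ : σ Xᶜ = 0)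
    (hσ' : σ' Xᶜ = 0) :
    (∫ x, φ x ∂σ) - ∫ x, φ x ∂σ' ≤ s * N3 X σ σ' := by
  -- `s` may vanish, so rescale by `t⁻¹` for every `t > s` and let `t` decrease to `s`.
  have hscaled : ∀ t > s, (∫ x, φ x ∂σ) - ∫ x, φ x ∂σ' ≤ t * N3 X σ σ' := fun t hst => by
    have ht : 0 < t := (c3Seminorm_nonneg X φ).trans_lt (hs.trans_lt hst)
    have h1 : c3Seminorm X (t⁻¹ • φ) ≤ 1 := by
      rw [c3Seminorm_const_smul hφ, abs_of_pos (inv_pos.mpr ht), inv_mul_le_iff₀ ht, mul_one]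
      exact hs.trans hst.le
    have := integral_sub_integral_le_N3 hX hXc (hφ.const_smul t⁻¹) h1 hσ hσ'
    simp only [smul_eq_mul, integral_const_mul, ← mul_sub] at this
    rwa [inv_mul_le_iff₀ ht] at this
  have hlim : Tendsto (fun t => t * N3 X σ σ') (𝓝[>] s) (𝓝 (s * N3 X σ σ')) :=
    ((continuous_mul_const _).tendsto s).mono_left nhdsWithin_le_nhds
  exact ge_of_tendsto hlim (eventually_nhdsWithin_of_forall hscaled)

end N3

theorem hasSum_of_tsum_eq {ι α : Type*} [AddCommMonoid α] [TopologicalSpace α] [T2Space α]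
    {f : ι → α} {a : α} (ha : a ≠ 0) (h : ∑' i, f i = a) : HasSum f a := by
  have hf : Summable f := by
    by_contra hf
    exact ha (h ▸ tsum_eq_zero_of_not_summable hf)
  exact hf.hasSum_iff.mpr h

section SectionalTransfer

variable {Ω I E : Type*} [MeasurableSpace E] {θ : I → Ω → Ω} {p : I → Ω → ℝ} {g : Ω → E → E}
  {ν : Ω → Measure E} {ω : Ω}

theorem sectionalTransfer_apply (hg : ∀ ω, Measurable (g ω)) {s : Set E} (hs : MeasurableSet s) :
    sectionalTransfer θ p g ν ω s =
      ∑' i, ENNReal.ofReal (p i ω) * ν (θ i ω) (g (θ i ω) ⁻¹' s) := by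
  simp [sectionalTransfer, Measure.sum_apply _ hs, Measure.map_apply (hg _) hs]

theorem isProbabilityMeasure_sectionalTransfer (hg : ∀ ω, Measurable (g ω))
    (hν : ∀ ω, IsProbabilityMeasure (ν ω)) (hp0 : ∀ i, 0 ≤ p i ω)
    (hp : HasSum (fun i => p i ω) 1) : IsProbabilityMeasure (sectionalTransfer θ p g ν ω) := by
  constructor
  simp [sectionalTransfer_apply hg MeasurableSet.univ,
    ← ENNReal.ofReal_tsum_of_nonneg hp0 hp.summable, hp.tsum_eq]

theorem sectionalTransfer_compl_eq_zero (hg : ∀ ω, Measurable (g ω)) {X : Set E}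
    (hX : MeasurableSet X) (hgX : ∀ ω, MapsTo (g ω) X X) (hν : ∀ ω, ν ω Xᶜ = 0) :
    sectionalTransfer θ p g ν ω Xᶜ = 0 := by
  have h (ω : Ω) : ν ω (g ω ⁻¹' X)ᶜ = 0 :=
    measure_mono_null (compl_subset_compl.mpr (hgX ω)) (hν ω)
  simp [sectionalTransfer_apply hg hX.compl, h]

theorem hasSum_integral_sectionalTransfer (hg : ∀ ω, Measurable (g ω)) (hp0 : ∀ i, 0 ≤ p i ω)
    {f : E → ℝ} (hf : Measurable f) (hint : Integrable f (sectionalTransfer θ p g ν ω)) :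
    HasSum (fun i => p i ω * ∫ x, f (g (θ i ω) x) ∂ν (θ i ω))
      (∫ x, f x ∂sectionalTransfer θ p g ν ω) := by
  refine (hasSum_integral_measure hint).congr_fun fun i => ?_
  rw [integral_smul_measure, integral_map (hg _).aemeasurable hf.aestronglyMeasurable,
    ENNReal.toReal_ofReal (hp0 i), smul_eq_mul]

end SectionalTransfer

theorem N3_sectionalTransfer_le {Ω I E : Type*} [NormedAddCommGroup E] [NormedSpace ℝ E]
    [MeasurableSpace E] [BorelSpace E] {X : Set E} (hX : IsCompact X)
    (hXc : Convex ℝ X) {θ : I → Ω → Ω} {p : I → Ω → ℝ} {g : Ω → E → E} {ω : Ω}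
    (hp0 : ∀ i, 0 ≤ p i ω) (hp : HasSum (fun i => p i ω) 1) (hg : ∀ ω, ContDiff ℝ 3 (g ω))
    (hgX : ∀ ω, MapsTo (g ω) X X) {lam : ℝ} (hlam : 0 ≤ lam)
    (hcontr : ∀ ω φ, ContDiff ℝ 3 φ → c3Seminorm X (φ ∘ g ω) ≤ lam * c3Seminorm X φ)
    {μ μ' : Ω → Measure E} (hμ : ∀ ω, IsProbabilityMeasure (μ ω))
    (hμ' : ∀ ω, IsProbabilityMeasure (μ' ω)) (hμX : ∀ ω, μ ω Xᶜ = 0) (hμ'X : ∀ ω, μ' ω Xᶜ = 0)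
    {M : ℝ} (hM : ∀ ω, N3 X (μ ω) (μ' ω) ≤ M) :
    N3 X (sectionalTransfer θ p g μ ω) (sectionalTransfer θ p g μ' ω) ≤ lam * M := by
  have hgm (ω : Ω) : Measurable (g ω) := (hg ω).continuous.measurable
  refine N3_le fun φ hφ h1 => ?_
  have hsum (ν : Ω → Measure E) (hν : ∀ ω, IsProbabilityMeasure (ν ω)) (hνX : ∀ ω, ν ω Xᶜ = 0) :
      HasSum (fun i => p i ω * ∫ x, φ (g (θ i ω) x) ∂ν (θ i ω))
        (∫ x, φ x ∂sectionalTransfer θ p g ν ω) :=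
    have := isProbabilityMeasure_sectionalTransfer (θ := θ) hgm hν hp0 hp
    hasSum_integral_sectionalTransfer hgm hp0 hφ.continuous.measurable
      (hφ.continuous.integrable_of_measure_compl_eq_zero hX
        (sectionalTransfer_compl_eq_zero hgm hX.measurableSet hgX hνX))
  refine (hasSum_le (fun i => ?_) ((hsum μ hμ hμX).sub (hsum μ' hμ' hμ'X))
    (hp.mul_right (lam * M))).trans_eq (one_mul _)
  rw [← mul_sub]
  gcongr
  · exact hp0 i
  have hψ : c3Seminorm X (φ ∘ g (θ i ω)) ≤ lam :=
    (hcontr _ φ hφ).trans (mul_le_of_le_one_right hlam h1)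
  calc _ ≤ lam * N3 X (μ (θ i ω)) (μ' (θ i ω)) :=
        integral_sub_integral_le_mul_N3 hX hXc (hφ.comp (hg _)) hψ (hμX _) (hμ'X _)
    _ ≤ lam * M := by gcongr; exact hM _

theorem fixedPoint_N3_stability_general
    {d : ℕ} (X : Set (EuclideanSpace ℝ (Fin d)))
    (hXcpt : IsCompact X) (hXconv : Convex ℝ X)
    {Ω I I' : Type*}
    -- the contracting operator K
    (θ : I → Ω → Ω) (p : I → Ω → ℝ)
    (hp0 : ∀ i ω, 0 ≤ p i ω) (hp1 : ∀ ω, ∑' i, p i ω = 1)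
    (g : Ω → EuclideanSpace ℝ (Fin d) → EuclideanSpace ℝ (Fin d))
    (hg3 : ∀ ω, ContDiff ℝ 3 (g ω)) (hgX : ∀ ω, Set.MapsTo (g ω) X X)
    (L₁ L₂ L₃ lam : ℝ) (hlam0 : 0 ≤ lam) (hlam1 : lam < 1)
    (hL₁ : ∀ ω, ∀ x ∈ X, ‖iteratedFDeriv ℝ 1 (g ω) x‖ ≤ L₁)
    (hL₂ : ∀ ω, ∀ x ∈ X, ‖iteratedFDeriv ℝ 2 (g ω) x‖ ≤ L₂)
    (hL₃ : ∀ ω, ∀ x ∈ X, ‖iteratedFDeriv ℝ 3 (g ω) x‖ ≤ L₃)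
    (hmax : max (L₁ + L₂ + L₃) (max (L₁ ^ 2 + 3 * L₁ * L₂) (L₁ ^ 3)) ≤ lam)
    -- the second operator K′ (no contraction assumed)
    (θ' : I' → Ω → Ω) (p' : I' → Ω → ℝ)
    (g' : Ω → EuclideanSpace ℝ (Fin d) → EuclideanSpace ℝ (Fin d))
    -- the fixed points
    (ν ν' : Ω → Measure (EuclideanSpace ℝ (Fin d)))
    (hνp : ∀ ω, IsProbabilityMeasure (ν ω)) (hν'p : ∀ ω, IsProbabilityMeasure (ν' ω))
    (hνX : ∀ ω, ν ω Xᶜ = 0) (hν'X : ∀ ω, ν' ω Xᶜ = 0)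
    (hνfix : ∀ ω, ν ω = sectionalTransfer θ p g ν ω)
    (hν'fix : ∀ ω, ν' ω = sectionalTransfer θ' p' g' ν' ω)
    (D : ℝ)
    (hKdiff : ∀ ω,
      N3 X (sectionalTransfer θ p g ν' ω) (sectionalTransfer θ' p' g' ν' ω) ≤ D) :
    ∀ ω : Ω, N3 X (ν ω) (ν' ω) ≤ D / (1 - lam) := by
  intro ω₀
  have : Nonempty Ω := ⟨ω₀⟩
  have hXne : X.Nonempty := nonempty_of_measure_compl_eq_zero (hνX ω₀)
  have hgm (ω : Ω) : Measurable (g ω) := (hg3 ω).continuous.measurable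
  have hp (ω : Ω) : HasSum (p · ω) 1 := hasSum_of_tsum_eq one_ne_zero (hp1 ω)
  have hcontr (ω : Ω) (φ : EuclideanSpace ℝ (Fin d) → ℝ) (hφ : ContDiff ℝ 3 φ) :
      c3Seminorm X (φ ∘ g ω) ≤ lam * c3Seminorm X φ :=
    (c3Seminorm_comp_le hXcpt hXne hφ (hg3 ω) (hgX ω) (hL₁ ω) (hL₂ ω) (hL₃ ω)).trans
      (mul_le_mul_of_nonneg_right hmax (c3Seminorm_nonneg X φ))
  set M := ⨆ ω, N3 X (ν ω) (ν' ω)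
  have hbdd : BddAbove (range fun ω => N3 X (ν ω) (ν' ω)) := by
    refine ⟨2 * Metric.diam X, ?_⟩
    rintro - ⟨ω, rfl⟩
    exact N3_le_two_mul_diam hXcpt hXconv (hνX ω) (hν'X ω)
  have hstep (ω : Ω) : N3 X (ν ω) (ν' ω) ≤ lam * M + D := by
    have := isProbabilityMeasure_sectionalTransfer (θ := θ) hgm hν'p (hp0 · ω) (hp ω)
    have hKX := sectionalTransfer_compl_eq_zero (θ := θ) (p := p) (ω := ω) hgm
      hXcpt.measurableSet hgX hν'X
    refine (N3_triangle hXcpt hXconv (hνX ω) hKX (hν'X ω)).trans (add_le_add ?_ ?_)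
    · rw [hνfix ω]
      exact N3_sectionalTransfer_le hXcpt hXconv (hp0 · ω) (hp ω) hg3 hgX hlam0 hcontr hνp hν'p
        hνX hν'X (le_ciSup hbdd)
    · rw [hν'fix ω]
      exact hKdiff ω
  have hM : M ≤ lam * M + D := ciSup_le hstep
  calc N3 X (ν ω₀) (ν' ω₀) ≤ M := le_ciSup hbdd ω₀
    _ ≤ D / (1 - lam) := by
      rw [le_div_iff₀ (sub_pos.mpr hlam1)]
      linarith

/-- Stability of fixed points of sectional transfer operators: if `K` is a sectional
transfer operator whose `C³` fibre maps preserve the compact convex `X ⊆ ℝ^d` with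
derivative bounds satisfying `max{L₁+L₂+L₃, L₁²+3L₁L₂, L₁³} ≤ λ < 1`, if `K′` is
another sectional transfer operator of the same form on `Ω` and `X`, and if `ν, ν′` are
fixed points of `K, K′` respectively with `N₃((Kν′)_ω, (K′ν′)_ω) ≤ D` for all `ω`, then
`N₃(ν_ω, ν′_ω) ≤ D/(1−λ)` for all `ω`. -/
theorem fixedPoint_N3_stability
    {d : ℕ} (X : Set (EuclideanSpace ℝ (Fin d)))
    (hXcpt : IsCompact X) (hXconv : Convex ℝ X) (hXne : X.Nonempty)
    {Ω I I' : Type*} [Countable I] [Countable I']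
    -- the contracting operator K
    (θ : I → Ω → Ω) (p : I → Ω → ℝ)
    (hp0 : ∀ i ω, 0 ≤ p i ω) (hp1 : ∀ ω, ∑' i, p i ω = 1)
    (g : Ω → EuclideanSpace ℝ (Fin d) → EuclideanSpace ℝ (Fin d))
    (hg3 : ∀ ω, ContDiff ℝ 3 (g ω)) (hgX : ∀ ω, Set.MapsTo (g ω) X X)
    (L₁ L₂ L₃ lam : ℝ) (hlam0 : 0 ≤ lam) (hlam1 : lam < 1)
    (hL₁ : ∀ ω, ∀ x ∈ X, ‖iteratedFDeriv ℝ 1 (g ω) x‖ ≤ L₁)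
    (hL₂ : ∀ ω, ∀ x ∈ X, ‖iteratedFDeriv ℝ 2 (g ω) x‖ ≤ L₂)
    (hL₃ : ∀ ω, ∀ x ∈ X, ‖iteratedFDeriv ℝ 3 (g ω) x‖ ≤ L₃)
    (hmax : max (L₁ + L₂ + L₃) (max (L₁ ^ 2 + 3 * L₁ * L₂) (L₁ ^ 3)) ≤ lam)
    -- the second operator K′ (no contraction assumed)
    (θ' : I' → Ω → Ω) (p' : I' → Ω → ℝ)
    (hp'0 : ∀ i ω, 0 ≤ p' i ω) (hp'1 : ∀ ω, ∑' i, p' i ω = 1)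
    (g' : Ω → EuclideanSpace ℝ (Fin d) → EuclideanSpace ℝ (Fin d))
    (hg'm : ∀ ω, Measurable (g' ω)) (hg'X : ∀ ω, Set.MapsTo (g' ω) X X)
    -- the fixed points
    (ν ν' : Ω → Measure (EuclideanSpace ℝ (Fin d)))
    (hνp : ∀ ω, IsProbabilityMeasure (ν ω)) (hν'p : ∀ ω, IsProbabilityMeasure (ν' ω))
    (hνX : ∀ ω, ν ω Xᶜ = 0) (hν'X : ∀ ω, ν' ω Xᶜ = 0)
    (hνfix : ∀ ω, ν ω = sectionalTransfer θ p g ν ω)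
    (hν'fix : ∀ ω, ν' ω = sectionalTransfer θ' p' g' ν' ω)
    (D : ℝ) (hD : 0 ≤ D)
    (hKdiff : ∀ ω,
      N3 X (sectionalTransfer θ p g ν' ω) (sectionalTransfer θ' p' g' ν' ω) ≤ D) :
    ∀ ω : Ω, N3 X (ν ω) (ν' ω) ≤ D / (1 - lam) :=
  fixedPoint_N3_stability_general X hXcpt hXconv θ p hp0 hp1 g hg3 hgX L₁ L₂ L₃ lam hlam0 hlam1 hL₁
    hL₂ hL₃ hmax θ' p' g' ν ν' hνp hν'p hνX hν'X hνfix hν'fix D hKdiff
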